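/- A MAK model (S, ⊨, ≺) gives rise to a MAK entailment C_MAK which is equal to the KLM entailment of some KLM model if and only if C_MAK is a pre-circumscription. -/
import Mathlib


/-- Formulas of a propositional language over variables `V`. -/
inductive Formula (V : Type) : Type
  | var : V → Formula V
  | neg : Formula V → Formula V
  | and : Formula V → Formula V → Formula V
  | or  : Formula V → Formula V → Formula V
  | imp : Formula V → Formula V → Formula V

/-- Classical satisfaction of a formula by an interpretation `μ ⊆ V`. -/
def Formula.Sat {V : Type} (μ : Set V) : Formula V → Prop
  | .var v => v ∈ μ
  | .neg φ => ¬ Formula.Sat μ φ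
  | .and φ ψ => Formula.Sat μ φ ∧ Formula.Sat μ ψ
  | .or φ ψ => Formula.Sat μ φ ∨ Formula.Sat μ ψ
  | .imp φ ψ => Formula.Sat μ φ → Formula.Sat μ ψ

/-- Classical consequence: every model of `T` satisfies `φ`. -/
def Entails {V : Type} (T : Set (Formula V)) (φ : Formula V) : Prop :=
  ∀ μ : Set V, (∀ ψ ∈ T, Formula.Sat μ ψ) → Formula.Sat μ φ

/-- `Th T` = set of classical consequences of `T`. -/
def Th {V : Type} (T : Set (Formula V)) : Set (Formula V) :=
  {φ | Entails T φ}

/-- A theory is a deductively closed set of formulas. -/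
def IsTheory {V : Type} (T : Set (Formula V)) : Prop :=
  Th T = T

/-- A pre-circumscription: values are theories, it is extensive,
and it respects full logical equivalence. -/
def IsPreCirc {V : Type} (f : Set (Formula V) → Set (Formula V)) : Prop :=
  (∀ T, IsTheory (f T)) ∧ (∀ T, T ⊆ f T) ∧
  (∀ T₁ T₂, Th T₁ = Th T₂ → f T₁ = f T₂)

/-- For a KLM model with labelling `l`, the set `S(T)` of states satisfying `T`. -/
def klmStates {V σ : Type} (l : σ → Set (Formula V)) (T : Set (Formula V)) : Set σ :=
  {s | Th T ⊆ l s}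

/-- The set `S_≺(T)` of `≺`-minimal states among those satisfying `T` (KLM model). -/
def klmMin {V σ : Type} (l : σ → Set (Formula V)) (prec : σ → σ → Prop)
    (T : Set (Formula V)) : Set σ :=
  {s | s ∈ klmStates l T ∧ ∀ s' ∈ klmStates l T, ¬ prec s' s}

/-- The KLM entailment defined by a KLM model `(σ, l, prec)`. -/
def CKLM {V σ : Type} (l : σ → Set (Formula V)) (prec : σ → σ → Prop)
    (T : Set (Formula V)) : Set (Formula V) :=
  {φ | ∀ s ∈ klmMin l prec T, φ ∈ l s}

/-- Smoothness (stopperedness) of a KLM model. -/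
def klmSmooth {V σ : Type} (l : σ → Set (Formula V)) (prec : σ → σ → Prop) : Prop :=
  ∀ T : Set (Formula V), ∀ s ∈ klmStates l T, s ∉ klmMin l prec T →
    ∃ s' ∈ klmMin l prec T, prec s' s

/-- For a MAK model with satisfaction relation `sat`, the set `S(T)` of states
satisfying every formula of `T`. -/
def makStates {V σ : Type} (sat : σ → Formula V → Prop) (T : Set (Formula V)) : Set σ :=
  {s | ∀ φ ∈ T, sat s φ}

/-- The set `S_≺(T)` of `≺`-minimal states among those satisfying `T` (MAK model). -/
def makMin {V σ : Type} (sat : σ → Formula V → Prop) (prec : σ → σ → Prop)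
    (T : Set (Formula V)) : Set σ :=
  {s | s ∈ makStates sat T ∧ ∀ s' ∈ makStates sat T, ¬ prec s' s}

/-- The MAK entailment defined by a MAK model `(σ, sat, prec)`. -/
def CMAK {V σ : Type} (sat : σ → Formula V → Prop) (prec : σ → σ → Prop)
    (T : Set (Formula V)) : Set (Formula V) :=
  {φ | ∀ s ∈ makMin sat prec T, sat s φ}

/-- The (monotonic) Tarski entailment `Cn_⊨` of a MAK model. -/
def Cn {V σ : Type} (sat : σ → Formula V → Prop) (T : Set (Formula V)) : Set (Formula V) :=
  {φ | ∀ s ∈ makStates sat T, sat s φ}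

/-- The set `Cn_⊨(s)` of formulas satisfied by a state `s` of a MAK model. -/
def CnState {V σ : Type} (sat : σ → Formula V → Prop) (s : σ) : Set (Formula V) :=
  {φ | sat s φ}

section Auxiliary

variable {V σ : Type}

lemma subset_Th (T : Set (Formula V)) : T ⊆ Th T :=
  fun φ hφ _μ hμ => hμ φ hφ

lemma entails_mono {T T' : Set (Formula V)} {φ : Formula V} (h : T ⊆ T')
    (he : Entails T φ) : Entails T' φ :=
  fun μ hμ => he μ (fun ψ hψ => hμ ψ (h hψ))

lemma Th_mono {T T' : Set (Formula V)} (h : T ⊆ T') : Th T ⊆ Th T' :=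
  fun _φ hφ => entails_mono h hφ

lemma Th_Th (T : Set (Formula V)) : Th (Th T) = Th T := by
  apply Set.Subset.antisymm
  · intro φ hφ μ hμ
    exact hφ μ (fun ψ hψ => hψ μ hμ)
  · exact subset_Th _

lemma isTheory_Th (T : Set (Formula V)) : IsTheory (Th T) := Th_Th T

lemma isTheory_univ : IsTheory (Set.univ : Set (Formula V)) :=
  Set.Subset.antisymm (Set.subset_univ _) (fun φ _ _μ hμ => hμ φ trivial)

/-- Key lemma: if `CMAK` is a pre-circumscription, then any state minimal for some
input has a deductively closed set of satisfied formulas. -/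
lemma minSome_theory (sat : σ → Formula V → Prop) (prec : σ → σ → Prop)
    (hpre : IsPreCirc (CMAK sat prec)) {s : σ} {X : Set (Formula V)}
    (hs : s ∈ makMin sat prec X) : IsTheory (CnState sat s) := by
  obtain ⟨hth, hext, hinv⟩ := hpre
  have h1 : s ∈ makMin sat prec (X ∪ CnState sat s) := by
    constructor
    · intro φ hφ
      cases hφ with
      | inl h => exact hs.1 φ h
      | inr h => exact h
    · intro t ht
      exact hs.2 t (fun φ hφ => ht φ (Or.inl hφ))
  have h2 : CMAK sat prec (X ∪ CnState sat s) ⊆ CnState sat s :=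
    fun φ hφ => hφ s h1
  have h3 : Th (X ∪ CnState sat s) ⊆ CMAK sat prec (X ∪ CnState sat s) := by
    have e : CMAK sat prec (X ∪ CnState sat s)
        = CMAK sat prec (Th (X ∪ CnState sat s)) :=
      hinv _ _ (Th_Th _).symm
    rw [e]
    exact fun φ hφ => hext (Th (X ∪ CnState sat s)) hφ
  apply Set.Subset.antisymm
  · intro φ hφ
    exact h2 (h3 (Th_mono (fun ψ hψ => Or.inr hψ) hφ))
  · exact subset_Th _

/-- Labels of the KLM model built from a MAK model. -/
def klabel (sat : σ → Formula V → Prop) (prec : σ → σ → Prop) :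
    Option (σ ⊕ σ × Set (Formula V)) → Set (Formula V)
  | none => Set.univ
  | some (Sum.inl s) => {φ | (∃ X, s ∈ makMin sat prec X) → sat s φ}
  | some (Sum.inr (s, G)) => {φ | (IsTheory G ∧ G ⊆ CnState sat s) → φ ∈ G}

/-- The MAK state "carried" by a KLM state (when valid). -/
def kcarrier (sat : σ → Formula V → Prop) (prec : σ → σ → Prop) :
    Option (σ ⊕ σ × Set (Formula V)) → σ → Prop
  | none, _ => False
  | some (Sum.inl t), u => t = u ∧ ∃ X, t ∈ makMin sat prec X
  | some (Sum.inr (t, G)), u => t = u ∧ IsTheory G ∧ G ⊆ CnState sat t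

/-- Preference of the KLM model built from a MAK model. -/
def kprec (sat : σ → Formula V → Prop) (prec : σ → σ → Prop) :
    Option (σ ⊕ σ × Set (Formula V)) → Option (σ ⊕ σ × Set (Formula V)) → Prop
  | _, none => False
  | x, some (Sum.inl s) => ∃ u, kcarrier sat prec x u ∧ prec u s
  | x, some (Sum.inr _) => x = none

lemma kcarrier_sat {sat : σ → Formula V → Prop} {prec : σ → σ → Prop}
    {U : Set (Formula V)} {x : Option (σ ⊕ σ × Set (Formula V))}
    (hx : x ∈ klmStates (klabel sat prec) U) {u : σ}
    (hc : kcarrier sat prec x u) : u ∈ makStates sat (Th U) := by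
  match x with
  | none => exact absurd hc (fun h => h)
  | some (Sum.inl t) =>
    obtain ⟨rfl, hm⟩ := hc
    intro φ hφ
    exact hx hφ hm
  | some (Sum.inr (t, G)) =>
    obtain ⟨rfl, hv⟩ := hc
    intro φ hφ
    exact hv.2 (hx hφ hv)

lemma klabel_theory (sat : σ → Formula V → Prop) (prec : σ → σ → Prop)
    (hpre : IsPreCirc (CMAK sat prec)) :
    ∀ x, IsTheory (klabel sat prec x) := by
  intro x
  match x with
  | none => exact isTheory_univ
  | some (Sum.inl s) =>
    by_cases h : ∃ X, s ∈ makMin sat prec X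
    · have e : klabel sat prec (some (Sum.inl s)) = CnState sat s := by
        ext ψ
        simp only [klabel, Set.mem_setOf_eq, CnState]
        exact ⟨fun hh => hh h, fun hh _ => hh⟩
      rw [e]
      obtain ⟨X, hX⟩ := h
      exact minSome_theory sat prec hpre hX
    · have e : klabel sat prec (some (Sum.inl s)) = Set.univ := by
        ext ψ
        simp only [klabel, Set.mem_setOf_eq, Set.mem_univ, iff_true]
        exact fun hh => absurd hh h
      rw [e]; exact isTheory_univ
  | some (Sum.inr (s, G)) =>
    by_cases h : IsTheory G ∧ G ⊆ CnState sat s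
    · have e : klabel sat prec (some (Sum.inr (s, G))) = G := by
        ext ψ
        simp only [klabel, Set.mem_setOf_eq]
        exact ⟨fun hh => hh h, fun hh _ => hh⟩
      rw [e]; exact h.1
    · have e : klabel sat prec (some (Sum.inr (s, G))) = Set.univ := by
        ext ψ
        simp only [klabel, Set.mem_setOf_eq, Set.mem_univ, iff_true]
        exact fun hh => absurd hh h
      rw [e]; exact isTheory_univ

lemma klm_eq (sat : σ → Formula V → Prop) (prec : σ → σ → Prop)
    (hpre : IsPreCirc (CMAK sat prec)) (T : Set (Formula V)) :
    CKLM (klabel sat prec) (kprec sat prec) T = CMAK sat prec T := by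
  have key : CKLM (klabel sat prec) (kprec sat prec) T = CMAK sat prec (Th T) := by
    apply Set.Subset.antisymm
    · intro φ hφ s hs
      have hmem : some (Sum.inl s) ∈ klmStates (klabel sat prec) T := by
        intro ψ hψ
        exact fun _ => hs.1 ψ hψ
      have hmin : some (Sum.inl s) ∈ klmMin (klabel sat prec) (kprec sat prec) T := by
        refine ⟨hmem, ?_⟩
        intro x' hx' hk
        obtain ⟨u, hc, hp⟩ := hk
        exact hs.2 u (kcarrier_sat hx' hc) hp
      exact hφ _ hmin ⟨Th T, hs⟩
    · intro φ hφ x hx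
      match x with
      | none => trivial
      | some (Sum.inl s) =>
        intro hm
        have hsat : s ∈ makStates sat (Th T) := fun ψ hψ => hx.1 hψ hm
        have hminS : s ∈ makMin sat prec (Th T) := by
          refine ⟨hsat, ?_⟩
          intro t ht hp
          refine hx.2 (some (Sum.inr (t, Th T))) ?_ ?_
          · intro ψ hψ
            exact fun _ => hψ
          · exact ⟨t, ⟨rfl, isTheory_Th T, ht⟩, hp⟩
        exact hφ s hminS
      | some (Sum.inr p) =>
        intro hv
        exact absurd rfl (hx.2 none (fun ψ _ => trivial))
  rw [key]
  exact hpre.2.2 (Th T) T (Th_Th T)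

end Auxiliary

/-- A MAK model gives rise to a MAK entailment equal to the KLM entailment of
some KLM model iff the MAK entailment is a pre-circumscription. -/
theorem mak_eq_klm_iff_preCirc {V σ : Type} (sat : σ → Formula V → Prop)
    (prec : σ → σ → Prop) :
    (∃ (σ' : Type) (l : σ' → Set (Formula V)) (prec' : σ' → σ' → Prop),
        (∀ s : σ', IsTheory (l s)) ∧
        ∀ T : Set (Formula V), CKLM l prec' T = CMAK sat prec T) ↔
    IsPreCirc (CMAK sat prec) := by
  constructor
  · rintro ⟨σ', l, prec', hth, heq⟩
    refine ⟨?_, ?_, ?_⟩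
    · intro T
      rw [← heq T]
      apply Set.Subset.antisymm
      · intro φ hφ x hx
        have hsub : CKLM l prec' T ⊆ l x := fun ψ hψ => hψ x hx
        have hE : Entails (CKLM l prec' T) φ := hφ
        have hE' : Entails (l x) φ := entails_mono hsub hE
        rw [← hth x]
        exact hE'
      · exact subset_Th _
    · intro T
      rw [← heq T]
      intro φ hφ x hx
      exact hx.1 (subset_Th T hφ)
    · intro T₁ T₂ h
      rw [← heq T₁, ← heq T₂]
      unfold CKLM klmMin klmStates
      rw [h]
  · intro hpre
    exact ⟨Option (σ ⊕ σ × Set (Formula V)), klabel sat prec, kprec sat prec,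
      klabel_theory sat prec hpre, klm_eq sat prec hpre⟩
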